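/- Conversely, let δ(X, y, u, v) be a predicate depending on y only through y ∩ [0, v], and suppose there is an infinite set W = {w_0 < w_1 < …} such that for every i there is a finite y ⊆ [0, w_i] with: for all j < i and u ≤ w_j, there exists v ≤ w_{j+1} with δ(X, y, u, v). Then there exists an (infinite) set Y ⊆ ℕ such that for every u there exists v with δ(X, Y, u, v). -/
import Mathlib

open Filter

theorem stmt_16 (X : Set ℕ) (δ : Set ℕ → Set ℕ → ℕ → ℕ → Prop)
    (hloc : ∀ (y : Set ℕ) (u v : ℕ), δ X y u v ↔ δ X (y ∩ Set.Iic v) u v)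
    (hmod : ∃ w : ℕ → ℕ, StrictMono w ∧
      ∀ i : ℕ, ∃ y : Finset ℕ, ↑y ⊆ Set.Iic (w i) ∧
        ∀ j < i, ∀ u ≤ w j, ∃ v ≤ w (j + 1), δ X ↑y u v) :
    ∃ Y : Set ℕ, ∀ u : ℕ, ∃ v : ℕ, δ X Y u v := by
  classical
  obtain ⟨w, hw, hy⟩ := hmod
  choose y hy1 hy2 using hy
  obtain ⟨U, hU⟩ : ∃ U : Ultrafilter ℕ, (U : Filter ℕ) ≤ atTop :=
    ⟨Ultrafilter.of atTop, Ultrafilter.of_le _⟩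
  refine ⟨{n | {i | n ∈ y i} ∈ U}, fun u => ?_⟩
  set Y : Set ℕ := {n | {i | n ∈ y i} ∈ U} with hY
  -- choose v for each i > u
  have hv : ∀ i, ∃ v, v ≤ w (u + 1) ∧ (u < i → δ X ↑(y i) u v) := by
    intro i
    by_cases h : u < i
    · obtain ⟨v, h1, h2⟩ := hy2 i u h u hw.le_apply
      exact ⟨v, h1, fun _ => h2⟩
    · exact ⟨0, Nat.zero_le _, fun h' => absurd h' h⟩
  choose v hvle hvδ using hv
  set g : ℕ → ℕ × Finset ℕ := fun i => (v i, (y i).filter (· ≤ v i)) with hg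
  set S : Finset (ℕ × Finset ℕ) :=
    (Finset.Iic (w (u + 1))) ×ˢ (Finset.Iic (w (u + 1))).powerset with hS
  have hgS : ∀ i, g i ∈ S := by
    intro i
    simp only [hS, hg, Finset.mem_product, Finset.mem_Iic, Finset.mem_powerset]
    refine ⟨hvle i, fun n hn => ?_⟩
    simp only [Finset.mem_filter] at hn
    exact Finset.mem_Iic.2 (le_trans hn.2 (hvle i))
  have huniv : (⋃ a ∈ (S : Set (ℕ × Finset ℕ)), {i | g i = a}) ∈ U := by
    have : (⋃ a ∈ (S : Set (ℕ × Finset ℕ)), {i | g i = a}) = Set.univ := by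
      ext i
      simp only [Set.mem_iUnion, Set.mem_setOf_eq, Set.mem_univ, iff_true]
      exact ⟨g i, hgS i, rfl⟩
    rw [this]; exact Filter.univ_mem
  obtain ⟨⟨v₀, s₀⟩, _, hA⟩ :=
    (Ultrafilter.finite_biUnion_mem_iff S.finite_toSet).1 huniv
  set A : Set ℕ := {i | g i = (v₀, s₀)} with hAdef
  have hAv : ∀ i ∈ A, v i = v₀ := fun i hi => congrArg Prod.fst hi
  have hAs : ∀ i ∈ A, (y i).filter (· ≤ v i) = s₀ := fun i hi => congrArg Prod.snd hi
  -- get a witness i₀ ∈ A with u < i₀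
  have hIoi : {i : ℕ | u < i} ∈ U := hU (Ioi_mem_atTop u)
  obtain ⟨i₀, hi₀A, hi₀u⟩ : ∃ i, i ∈ A ∧ u < i := by
    have := (U : Filter ℕ).inter_mem hA hIoi
    obtain ⟨i, hi⟩ := Filter.nonempty_of_mem this
    exact ⟨i, hi.1, hi.2⟩
  have hδ₀ : δ X (↑(y i₀)) u v₀ := by
    have := hvδ i₀ hi₀u
    rwa [hAv i₀ hi₀A] at this
  have hcoe : (↑(y i₀) : Set ℕ) ∩ Set.Iic v₀ = ↑s₀ := by
    rw [← hAs i₀ hi₀A, hAv i₀ hi₀A]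
    ext n
    simp [Set.mem_Iic]
  have hδs : δ X (↑s₀) u v₀ := by
    rw [← hcoe]; exact (hloc _ u v₀).1 hδ₀
  -- show Y ∩ Iic v₀ = ↑s₀
  have hs₀le : ∀ n ∈ s₀, n ≤ v₀ := by
    intro n hn
    rw [← hAs i₀ hi₀A] at hn
    simp only [Finset.mem_filter] at hn
    exact le_of_le_of_eq hn.2 (hAv i₀ hi₀A)
  have hYs : Y ∩ Set.Iic v₀ = ↑s₀ := by
    ext n
    constructor
    · rintro ⟨hnY, hnv⟩
      have hmem : {i | n ∈ y i} ∩ A ∈ U := (U : Filter ℕ).inter_mem hnY hA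
      obtain ⟨i, hin, hiA⟩ := Filter.nonempty_of_mem hmem
      rw [← hAs i hiA]
      simp only [Finset.coe_filter, Set.mem_setOf_eq]
      exact ⟨hin, le_of_le_of_eq hnv (hAv i hiA).symm⟩
    · intro hn
      have hn' : n ∈ s₀ := hn
      refine ⟨?_, hs₀le n hn'⟩
      have hsub : A ⊆ {i | n ∈ y i} := by
        intro i hiA
        have : n ∈ (y i).filter (· ≤ v i) := by rw [hAs i hiA]; exact hn'
        exact (Finset.mem_filter.1 this).1
      exact (U : Filter ℕ).mem_of_superset hA hsub
  refine ⟨v₀, ?_⟩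
  rw [hloc Y u v₀, hYs]
  exact hδs
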